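/- Let ℓ ≥ 1 and let q̄(w) = Σ_{k=0}^{ℓ} binom(−1/2,k)(−2)^k w^{ℓ−k}. If q is any monic polynomial of degree ℓ with coefficient of w^{ℓ−1} equal to 1 such that (2ℓ+1)(w−2)q(w) − w·q(w) − 2w(w−2)q′(w) is constant, then q = q̄. -/

import Mathlib

/-!
Comparing the coefficients of `w^(j+1)` in the differential equation gives the first-order
recurrence `(m + 1) c_{m+1} = (2m + 1) c_m` for `c_m = q.coeff (ℓ - m)`. A monic solution has
`c_0 = 1`, so the recurrence determines `q` completely; and `binom(-1/2, m) (-2)^m` satisfies the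
same recurrence with the same initial value.
-/

open Polynomial

/-- The generalized binomial coefficient `binom(−1/2, k)`. -/
noncomputable def gbinom (k : ℕ) : ℂ :=
  (∏ j ∈ Finset.range k, ((-1/2 : ℂ) - j)) / (Nat.factorial k)

/-- `q̄(w) = Σ_{k=0}^{ℓ} binom(−1/2,k)(−2)^k w^{ℓ−k}`. -/
noncomputable def qbar (ℓ : ℕ) : Polynomial ℂ :=
  ∑ k ∈ Finset.range (ℓ + 1), C (gbinom k * (-2 : ℂ) ^ k) * X ^ (ℓ - k)

/-- The coefficient of `w^(ℓ - m)` in `qbar ℓ`. -/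
noncomputable def qbarCoeff (m : ℕ) : ℂ := gbinom m * (-2 : ℂ) ^ m

lemma qbarCoeff_zero : qbarCoeff 0 = 1 := by simp [qbarCoeff, gbinom]

lemma succ_mul_qbarCoeff_succ (m : ℕ) :
    ((m : ℂ) + 1) * qbarCoeff (m + 1) = (2 * m + 1) * qbarCoeff m := by
  have hfact : (m.factorial : ℂ) ≠ 0 := Nat.cast_ne_zero.mpr m.factorial_ne_zero
  have hsucc : (m : ℂ) + 1 ≠ 0 := Nat.cast_add_one_ne_zero m
  simp only [qbarCoeff, gbinom, Finset.prod_range_succ, Nat.factorial_succ, Nat.cast_mul,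
    Nat.cast_add, Nat.cast_one, pow_succ]
  field_simp
  ring

lemma coeff_qbar (ℓ n : ℕ) :
    (qbar ℓ).coeff n = if n ≤ ℓ then qbarCoeff (ℓ - n) else 0 := by
  simp only [qbar, finsetSum_coeff, coeff_C_mul, coeff_X_pow, mul_ite, mul_one, mul_zero]
  split_ifs with hn
  · rw [Finset.sum_eq_single_of_mem (ℓ - n) (Finset.mem_range.mpr (by omega))
      (fun k hk _ => if_neg (by simp at hk; omega)),
      if_pos (by omega), qbarCoeff]
  · exact Finset.sum_eq_zero fun k hk => if_neg (by simp at hk; omega)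

lemma coeff_X_mul_derivative {R : Type*} [Semiring R] (p : R[X]) (n : ℕ) :
    (X * derivative p).coeff n = n * p.coeff n := by
  cases n with
  | zero => simp
  | succ n => rw [coeff_X_mul, coeff_derivative, (Nat.cast_commute (n + 1) _).eq, Nat.cast_succ]

noncomputable def qbarOperator (ℓ : ℕ) (q : ℂ[X]) : ℂ[X] :=
  C (2 * (ℓ : ℂ) + 1) * ((X - C 2) * q) - X * q - C 2 * X * (X - C 2) * derivative q

lemma coeff_succ_qbarOperator (ℓ : ℕ) (q : ℂ[X]) (j : ℕ) :
    (qbarOperator ℓ q).coeff (j + 1)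
      = 2 * ((ℓ : ℂ) - j) * q.coeff j - (4 * (ℓ : ℂ) - 4 * j - 2) * q.coeff (j + 1) := by
  have hexpand : qbarOperator ℓ q =
      C (2 * (ℓ : ℂ) + 1) * (X * q) - C (2 * (ℓ : ℂ) + 1) * (C 2 * q) - X * q
        - (C 2 * (X * (X * derivative q)) - C 2 * (C 2 * (X * derivative q))) := by
    rw [qbarOperator]; ring
  rw [hexpand]
  simp only [coeff_sub, coeff_C_mul, coeff_X_mul_derivative]
  simp only [coeff_X_mul, coeff_X_mul_derivative, Nat.cast_succ]
  ring

lemma succ_mul_coeff_sub_succ_of_qbarOperator_eq_C {ℓ : ℕ} {q : ℂ[X]} {K : ℂ}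
    (h : qbarOperator ℓ q = C K) {m : ℕ} (hm : m < ℓ) :
    ((m : ℂ) + 1) * q.coeff (ℓ - (m + 1)) = (2 * m + 1) * q.coeff (ℓ - m) := by
  have hcoeff := coeff_succ_qbarOperator ℓ q (ℓ - (m + 1))
  rw [h, coeff_C_succ, show ℓ - (m + 1) + 1 = ℓ - m by omega,
    Nat.cast_sub (by omega : m + 1 ≤ ℓ)] at hcoeff
  push_cast at hcoeff
  linear_combination -hcoeff / 2

lemma coeff_sub_eq_qbarCoeff_of_qbarOperator_eq_C {ℓ : ℕ} {q : ℂ[X]} {K : ℂ}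
    (hmonic : q.Monic) (hdeg : q.natDegree = ℓ) (h : qbarOperator ℓ q = C K) :
    ∀ m ≤ ℓ, q.coeff (ℓ - m) = qbarCoeff m := by
  intro m
  induction m with
  | zero => simpa [qbarCoeff_zero, ← hdeg] using hmonic.coeff_natDegree
  | succ m ih =>
    intro hm
    have hsucc : (m : ℂ) + 1 ≠ 0 := Nat.cast_add_one_ne_zero m
    apply mul_left_cancel₀ hsucc
    rw [succ_mul_coeff_sub_succ_of_qbarOperator_eq_C h hm, succ_mul_qbarCoeff_succ,
      ih (by omega)]

theorem stmt19_general (ℓ : ℕ) (q : Polynomial ℂ)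
    (hmonic : q.Monic) (hdeg : q.natDegree = ℓ)
    (hconst : ∃ K : ℂ,
      C (2 * (ℓ : ℂ) + 1) * ((X - C 2) * q) - X * q - C 2 * X * (X - C 2) * derivative q
        = C K) :
    q = qbar ℓ := by
  obtain ⟨K, hK⟩ := hconst
  have hcoeff := coeff_sub_eq_qbarCoeff_of_qbarOperator_eq_C hmonic hdeg hK
  ext n
  rw [coeff_qbar]
  split_ifs with hn
  · simpa [Nat.sub_sub_self hn] using hcoeff (ℓ - n) (by omega)
  · exact coeff_eq_zero_of_natDegree_lt (by omega)

theorem stmt19 (ℓ : ℕ) (hℓ : 1 ≤ ℓ) (q : Polynomial ℂ)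
    (hmonic : q.Monic) (hdeg : q.natDegree = ℓ) (hcoeff : q.coeff (ℓ - 1) = 1)
    (hconst : ∃ K : ℂ,
      C (2 * (ℓ : ℂ) + 1) * ((X - C 2) * q) - X * q - C 2 * X * (X - C 2) * derivative q
        = C K) :
    q = qbar ℓ :=
  stmt19_general ℓ q hmonic hdeg hconst
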